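/- arXiv:1410.7181 — 2 statements merged into one kernel-verified Lean document; each statement's English description precedes it below -/
import Mathlib

section
/- Let f_n ∈ SL(2,ℝ) with lower-left entries c_n ≠ 0 and f_n → Id entrywise. Then for every α > 0, the matrix [[α,0],[0,α⁻¹]] is a limit of matrices of the form u'_n f_n u''_n with u'_n, u''_n in the upper unipotent subgroup U. -/
open Filter Topology

theorem Matrix.upperUnipotent_mul_mul_upperUnipotent {R : Type*} [CommRing R]
    (s a b c d s' : R) :
    !![1, s; 0, 1] * !![a, b; c, d] * !![1, s'; 0, 1] =
      !![a + s * c, (a + s * c) * s' + b + s * d; c, c * s' + d] := by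
  rw [Matrix.mul_fin_two, Matrix.mul_fin_two]
  ext i j
  fin_cases i <;> fin_cases j <;> simp
  ring

/-- Once the top-right entry is cleared, `det = 1` forces the bottom-right entry to be `α⁻¹`. -/
theorem Matrix.upperUnipotent_mul_mul_upperUnipotent_eq_of_det {K : Type*} [Field K]
    {a b c d : K} (hdet : a * d - b * c = 1) (hc : c ≠ 0) {α : K} (hα : α ≠ 0) :
    !![1, (α - a) / c; 0, 1] * !![a, b; c, d] * !![1, -(b + d * ((α - a) / c)) / α; 0, 1] =
      !![α, 0; c, α⁻¹] := by
  rw [upperUnipotent_mul_mul_upperUnipotent]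
  have htop : a + (α - a) / c * c = α := by field_simp; ring
  rw [htop]
  ext i j
  fin_cases i <;> fin_cases j
  all_goals simp
  · field_simp; ring
  · field_simp; linear_combination hdet

/-- If `f_n = [[a_n,b_n],[c_n,d_n]] ∈ SL(2,ℝ)` has `c_n ≠ 0` and `f_n → Id`
entrywise, then for every `α > 0` the matrix `diag(α,α⁻¹)` is a limit of matrices
`u'_n f_n u''_n` with `u'_n, u''_n` upper unipotent. -/
theorem stmt_5 (a b c d : ℕ → ℝ) (hdet : ∀ n, a n * d n - b n * c n = 1)
    (hc : ∀ n, c n ≠ 0)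
    (hf : Tendsto (fun n => !![a n, b n; c n, d n]) atTop
      (𝓝 (1 : Matrix (Fin 2) (Fin 2) ℝ)))
    (α : ℝ) (hα : 0 < α) :
    ∃ s s' : ℕ → ℝ,
      Tendsto (fun n => !![1, s n; 0, 1] * !![a n, b n; c n, d n] * !![1, s' n; 0, 1])
        atTop (𝓝 !![α, 0; 0, α⁻¹]) := by
  refine ⟨fun n => (α - a n) / c n, fun n => -(b n + d n * ((α - a n) / c n)) / α, ?_⟩
  simp only [Matrix.upperUnipotent_mul_mul_upperUnipotent_eq_of_det (hdet _) (hc _) hα.ne']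
  have hc0 : Tendsto c atTop (𝓝 0) :=
    ((continuous_apply_apply 1 0).tendsto _).comp hf
  have hcont : Continuous fun t : ℝ => !![α, 0; t, α⁻¹] := by fun_prop
  exact (hcont.tendsto 0).comp hc0
end

section
/- Let Γ be a discrete subgroup of PSL(2,ℝ) × G (G a topological group) such that the quotient Γ\(PSL(2,ℝ) × G) is compact. Then Γ contains no semi-parabolic element, i.e., no element (f,g) with f conjugate in PSL(2,ℝ) to a nontrivial upper unipotent matrix. -/
/-!
If `γ = (±h uₜ h⁻¹, g)` lies in `Γ`, conjugating `γ` by `(h aₛ, 1)` with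
`aₛ = diag(eˢ, e⁻ˢ)` shrinks the unipotent part, so these conjugates converge to `(±1, g)` as
`s → ∞`. Since `Γ\(SL(2,ℝ) × G)` is compact, the basepoints `Γ (h aₛ, 1)` cluster, so the
conjugates of `γ` by suitable elements of `Γ` accumulate at a conjugate of `(±1, g)`. These
all lie in the discrete group `Γ`, so one of them is that limit (up to inseparability, as `G`
need not be Hausdorff), and projecting to the first factor gives `uₜ = 1`.
-/

open scoped MatrixGroups
open Filter Topology

instance : TopologicalSpace SL(2, ℝ) := instTopologicalSpaceSubtype

def uni (t : ℝ) : SL(2, ℝ) := ⟨!![1, t; 0, 1], by simp [Matrix.det_fin_two_of]⟩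

section DiscreteCocompact

variable {X : Type*} [Group X] [TopologicalSpace X] [IsTopologicalGroup X]

theorem Subgroup.exists_mem_nhds_subsingleton_inter (Γ : Subgroup X) [DiscreteTopology Γ]
    (p : X) : ∃ N ∈ 𝓝 p, (N ∩ Γ).Subsingleton := by
  have hone : ({1} : Set Γ) ∈ 𝓝 (1 : Γ) := (isOpen_discrete _).mem_nhds rfl
  rw [IsInducing.subtypeVal.nhds_eq_comap, Filter.mem_comap] at hone
  obtain ⟨V, hV, hVΓ⟩ := hone
  obtain ⟨W, hW, hWV⟩ := exists_nhds_split_inv hV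
  refine ⟨(· * p⁻¹) ⁻¹' W, nhds_translation_mul_inv p ▸ preimage_mem_comap hW, ?_⟩
  rintro δ₁ ⟨h₁W, h₁Γ⟩ δ₂ ⟨h₂W, h₂Γ⟩
  have hV : δ₁ / δ₂ ∈ V := by simpa only [mul_div_mul_right_eq_div] using hWV _ h₁W _ h₂W
  have hδ : (⟨δ₁ / δ₂, div_mem h₁Γ h₂Γ⟩ : Γ) = 1 := hVΓ hV
  exact div_eq_one.mp (congrArg Subtype.val hδ)

theorem exists_inseparable_of_mem_closure_of_subset_subgroup (Γ : Subgroup X)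
    [DiscreteTopology Γ] {S : Set X} (hS : S ⊆ Γ) {p : X} (hp : p ∈ closure S) :
    ∃ δ ∈ S, Inseparable δ p := by
  obtain ⟨N, hN, hNΓ⟩ := Γ.exists_mem_nhds_subsingleton_inter p
  obtain ⟨δ, hδN, hδS⟩ := mem_closure_iff_nhds.mp hp N hN
  have hδp : δ ⤳ p := by
    refine specializes_iff_pure.mpr (le_nhds_iff.mpr fun O hpO hO ↦ ?_)
    obtain ⟨δ', ⟨hδ'O, hδ'N⟩, hδ'S⟩ :=
      mem_closure_iff_nhds.mp hp (O ∩ N) (inter_mem (hO.mem_nhds hpO) hN)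
    exact hNΓ ⟨hδ'N, hS hδ'S⟩ ⟨hδN, hS hδS⟩ ▸ hδ'O
  exact ⟨δ, hδS, hδp.antisymm hδp.symm⟩

theorem exists_conj_mem_closure_conj_of_tendsto (Γ : Subgroup X)
    [CompactSpace (Quotient (MulAction.orbitRel Γ X))] (γ : X) {ι : Type*} {F : Filter ι}
    [F.NeBot] {x : ι → X} {l : X} (hl : Tendsto (fun i ↦ (x i)⁻¹ * γ * x i) F (𝓝 l)) :
    ∃ y : X, y * l * y⁻¹ ∈ closure (Set.range fun g : Γ ↦ (g : X) * γ * (g : X)⁻¹) := by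
  let q := Quotient.mk (MulAction.orbitRel Γ X)
  obtain ⟨_, hy⟩ := exists_clusterPt_of_compactSpace (map (q ∘ x) F)
  obtain ⟨y, rfl⟩ := Quotient.exists_rep ‹_›
  refine ⟨y, mem_closure_iff_nhds.mpr fun O hO ↦ ?_⟩
  have hconj : Continuous fun zw : X × X ↦ zw.1 * zw.2 * zw.1⁻¹ := by fun_prop
  obtain ⟨Z, hZ, M, hM, hZM⟩ := mem_nhds_prod_iff.mp (hconj.continuousAt (x := (y, l)) hO)
  have hqZ : q '' Z ∈ 𝓝 (q y) :=
    MulAction.isOpenQuotientMap_quotientMk.isOpenMap.image_mem_nhds hZ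
  obtain ⟨i, ⟨z, hzZ, hzx⟩, hiM⟩ :=
    ((mapClusterPt_iff_frequently.mp hy _ hqZ).and_eventually (hl hM)).exists
  obtain ⟨g, rfl⟩ := MulAction.mem_orbit_iff.mp (MulAction.orbitRel_apply.mp (Quotient.exact hzx))
  refine ⟨g * γ * g⁻¹, ?_, g, rfl⟩
  have hgO := hZM (Set.mk_mem_prod hzZ hiM)
  simp only [Set.mem_preimage, Subgroup.smul_def, smul_eq_mul] at hgO
  simpa only [Subgroup.coe_inv, mul_assoc, mul_inv_cancel_left, mul_inv_rev] using hgO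

theorem exists_conj_inseparable_of_tendsto_conj (Γ : Subgroup X) [DiscreteTopology Γ]
    [CompactSpace (Quotient (MulAction.orbitRel Γ X))] {γ : X} (hγ : γ ∈ Γ) {ι : Type*}
    {F : Filter ι} [F.NeBot] {x : ι → X} {l : X}
    (hl : Tendsto (fun i ↦ (x i)⁻¹ * γ * x i) F (𝓝 l)) :
    ∃ g ∈ Γ, ∃ y : X, Inseparable (g * γ * g⁻¹) (y * l * y⁻¹) := by
  obtain ⟨y, hy⟩ := exists_conj_mem_closure_conj_of_tendsto Γ γ hl
  obtain ⟨_, ⟨g, rfl⟩, hg⟩ := exists_inseparable_of_mem_closure_of_subset_subgroup Γ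
    (Set.range_subset_iff.mpr fun g : Γ ↦ mul_mem (mul_mem g.2 hγ) (inv_mem g.2)) hy
  exact ⟨g, g.2, y, hg⟩

end DiscreteCocompact

theorem eq_one_of_tendsto_conj_of_mem_prod {H G : Type*} [Group H] [TopologicalSpace H]
    [IsTopologicalGroup H] [T0Space H] [Group G] [TopologicalSpace G] [IsTopologicalGroup G]
    (Γ : Subgroup (H × G)) [DiscreteTopology Γ]
    [CompactSpace (Quotient (MulAction.orbitRel Γ (H × G)))] {γ : H × G} (hγ : γ ∈ Γ)
    {ζ u : H} (hζ : ζ ∈ Subgroup.center H) (hγu : γ.1 = ζ * u) {ι : Type*} {F : Filter ι}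
    [F.NeBot] {x : ι → H} (hx : Tendsto (fun i ↦ (x i)⁻¹ * u * x i) F (𝓝 1)) : u = 1 := by
  have hconj (a v : H) : a * (ζ * v) * a⁻¹ = ζ * (a * v * a⁻¹) := by
    rw [← mul_assoc a, Subgroup.mem_center_iff.mp hζ a, mul_assoc, mul_assoc, mul_assoc]
  have hlim : Tendsto (fun i ↦ ((x i, 1) : H × G)⁻¹ * γ * (x i, 1)) F (𝓝 (ζ, γ.2)) := by
    have hfst : Tendsto (fun i ↦ ζ * ((x i)⁻¹ * u * x i)) F (𝓝 ζ) := by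
      simpa using tendsto_const_nhds.mul hx
    convert hfst.prodMk_nhds (tendsto_const_nhds (x := γ.2)) using 2 with i
    ext
    · simpa [hγu] using hconj (x i)⁻¹ u
    · simp
  obtain ⟨g, -, y, hgy⟩ := exists_conj_inseparable_of_tendsto_conj Γ hγ hlim
  have hg : g.1 * γ.1 * g.1⁻¹ = y.1 * ζ * y.1⁻¹ := (hgy.map continuous_fst).eq
  rwa [hγu, hconj, Subgroup.mem_center_iff.mp hζ y.1, mul_inv_cancel_right, mul_eq_left,
    mul_inv_eq_one, mul_eq_left] at hg

instance : IsTopologicalGroup SL(2, ℝ) := Matrix.SpecialLinearGroup.topologicalGroup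

instance : T1Space SL(2, ℝ) := Matrix.SpecialLinearGroup.instT1Space

theorem continuous_uni : Continuous uni :=
  continuous_induced_rng.mpr (by unfold uni; fun_prop)

@[simp]
theorem coe_uni (t : ℝ) : (uni t : Matrix (Fin 2) (Fin 2) ℝ) = !![1, t; 0, 1] := rfl

theorem uni_zero : uni 0 = 1 := by
  ext i j
  fin_cases i <;> fin_cases j <;> rfl

theorem eq_zero_of_uni_eq_one {t : ℝ} (ht : uni t = 1) : t = 0 := by
  simpa using congrArg (fun A : SL(2, ℝ) ↦ A 0 1) ht

noncomputable def diagExp (s : ℝ) : SL(2, ℝ) :=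
  ⟨!![Real.exp s, 0; 0, Real.exp (-s)], by simp [Matrix.det_fin_two_of, ← Real.exp_add]⟩

@[simp]
theorem coe_diagExp (s : ℝ) :
    (diagExp s : Matrix (Fin 2) (Fin 2) ℝ) = !![Real.exp s, 0; 0, Real.exp (-s)] := rfl

theorem diagExp_inv_mul_uni_mul (s t : ℝ) :
    (diagExp s)⁻¹ * uni t * diagExp s = uni (Real.exp (-(2 * s)) * t) := by
  rw [mul_assoc, inv_mul_eq_iff_eq_mul]
  ext : 1
  have hexp : Real.exp s * (Real.exp (-(2 * s)) * t) = t * Real.exp (-s) := by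
    rw [← mul_assoc, ← Real.exp_add]
    ring_nf
  simp [hexp]

theorem tendsto_diagExp_inv_mul_uni_mul (t : ℝ) :
    Tendsto (fun s ↦ (diagExp s)⁻¹ * uni t * diagExp s) atTop (𝓝 1) := by
  simp_rw [diagExp_inv_mul_uni_mul]
  have h : Tendsto (fun s ↦ Real.exp (-(2 * s)) * t) atTop (𝓝 0) := by
    simpa using (Real.tendsto_exp_neg_atTop_nhds_zero.comp
      (tendsto_id.const_mul_atTop two_pos)).mul_const t
  exact uni_zero ▸ (continuous_uni.tendsto 0).comp h

/-- Let `Γ` be a discrete subgroup of `PSL(2,ℝ) × G` (here represented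
by matrices of `SL(2,ℝ)` up to sign) with compact quotient `Γ\(PSL(2,ℝ) × G)`. Then `Γ`
contains no semi-parabolic element, i.e. no element `(f,g)` with `f` conjugate in
`PSL(2,ℝ)` to a nontrivial upper unipotent element. -/
theorem stmt_11 (G : Type*) [Group G] [TopologicalSpace G] [IsTopologicalGroup G]
    (Γ : Subgroup (SL(2, ℝ) × G)) (hdisc : DiscreteTopology Γ)
    (hcpt : CompactSpace (Quotient (MulAction.orbitRel Γ (SL(2, ℝ) × G)))) :
    ¬ ∃ γ ∈ Γ, ∃ (h : SL(2, ℝ)) (t : ℝ), t ≠ 0 ∧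
      ((γ.1 : Matrix (Fin 2) (Fin 2) ℝ)
          = ((h * uni t * h⁻¹ : SL(2, ℝ)) : Matrix (Fin 2) (Fin 2) ℝ) ∨
        (γ.1 : Matrix (Fin 2) (Fin 2) ℝ)
          = -((h * uni t * h⁻¹ : SL(2, ℝ)) : Matrix (Fin 2) (Fin 2) ℝ)) := by
  rintro ⟨γ, hγ, h, t, ht, hγ₁⟩
  obtain ⟨ζ, hζ, hγζ⟩ : ∃ ζ ∈ Subgroup.center SL(2, ℝ), γ.1 = ζ * (h * uni t * h⁻¹) := by
    rcases hγ₁ with hγ₁ | hγ₁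
    · exact ⟨1, one_mem _, by rw [one_mul]; exact Subtype.ext hγ₁⟩
    · refine ⟨-1, Subgroup.mem_center_iff.mpr fun a ↦ (Commute.neg_one_left a).eq.symm, ?_⟩
      exact Subtype.ext (by simp [hγ₁])
  have hconj : Tendsto (fun s ↦ (h * diagExp s)⁻¹ * (h * uni t * h⁻¹) * (h * diagExp s))
      atTop (𝓝 1) := by
    convert tendsto_diagExp_inv_mul_uni_mul t using 2
    group
  have hu := eq_one_of_tendsto_conj_of_mem_prod Γ hγ hζ hγζ hconj
  exact ht (eq_zero_of_uni_eq_one (by simpa using hu))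
end
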